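/- For every integer n' > ω, an Ω^ω-tree contains at most one subtree of size n' (where subtrees are the maximal subtrees rooted at internal nodes). -/

import Mathlib

/-!
Common definitions: plane (ordered) labeled binary trees, the flip relation
generating the "unordered" identification, ranked trees, Ω-trees, and counts.
-/

/-- Plane rooted binary trees whose internal nodes carry a label. -/
inductive PTree : Type where
  | leaf : PTree
  | node : ℕ → PTree → PTree → PTree
deriving DecidableEq

namespace PTree

/-- Size: the number of internal nodes. -/
def size : PTree → ℕ
  | leaf => 0
  | node _ l r => l.size + r.size + 1

/-- Number of cherries: internal nodes whose two children are leaves. -/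
def cherries : PTree → ℕ
  | leaf => 0
  | node _ leaf leaf => 1
  | node _ l r => l.cherries + r.cherries

/-- Multiset of labels of internal nodes. -/
def labels : PTree → Multiset ℕ
  | leaf => 0
  | node k l r => k ::ₘ (l.labels + r.labels)

/-- Labels increase away from the root: each internal node's label is smaller
than all labels in its subtrees. -/
def Incr : PTree → Prop
  | leaf => True
  | node k l r =>
      (∀ m ∈ l.labels, k < m) ∧ (∀ m ∈ r.labels, k < m) ∧ Incr l ∧ Incr r

/-- A ranked tree of size `n`: labels increase from the root and the internal
labels are exactly `{1, …, n}` (each occurring once). -/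
def IsRanked (n : ℕ) (t : PTree) : Prop :=
  t.Incr ∧ t.labels = (Finset.Icc 1 n).val

/-- The Ω-condition: at every internal node, the smaller of the two child
subtrees has at most `ω` internal nodes. -/
def OmegaOK (ω : ℕ) : PTree → Prop
  | leaf => True
  | node _ l r => min l.size r.size ≤ ω ∧ OmegaOK ω l ∧ OmegaOK ω r

/-- One-step flip: swap the two children of some internal node. -/
inductive Flip : PTree → PTree → Prop
  | swap (k : ℕ) (l r : PTree) : Flip (node k l r) (node k r l)
  | congL {l l' : PTree} (k : ℕ) (r : PTree) : Flip l l' → Flip (node k l r) (node k l' r)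
  | congR {r r' : PTree} (k : ℕ) (l : PTree) : Flip r r' → Flip (node k l r) (node k l r')

end PTree

/-- Setoid on trees satisfying `P`, identifying trees up to swapping children
(so that left/right order is immaterial). -/
def treeSetoid (P : PTree → Prop) : Setoid {t : PTree // P t} :=
  Relation.EqvGen.setoid (fun a b => PTree.Flip a.1 b.1)

/-- `|R_n|` : the number of ranked trees (histories) of size `n`. -/
noncomputable def rankedCount (n : ℕ) : ℕ :=
  Nat.card (Quotient (treeSetoid (PTree.IsRanked n)))

/-- `e_{n,l}` : the number of ranked trees of size `n` with `l` cherries. -/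
noncomputable def rankedCountC (n l : ℕ) : ℕ :=
  Nat.card (Quotient (treeSetoid (fun t => PTree.IsRanked n t ∧ t.cherries = l)))

/-- `|Ω^ω_n|` : the number of Ω^ω-trees of size `n`. -/
noncomputable def omegaCount (ω n : ℕ) : ℕ :=
  Nat.card (Quotient (treeSetoid (fun t => PTree.IsRanked n t ∧ PTree.OmegaOK ω t)))

/-- `|Ω^ω_{n,l}|` : the number of Ω^ω-trees of size `n` with `l` cherries. -/
noncomputable def omegaCountC (ω n l : ℕ) : ℕ :=
  Nat.card (Quotient (treeSetoid
    (fun t => PTree.IsRanked n t ∧ PTree.OmegaOK ω t ∧ t.cherries = l)))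

namespace PTree
/-- The multiset of (maximal) subtrees rooted at the internal nodes. -/
def subtrees : PTree → Multiset PTree
  | leaf => 0
  | node k l r => (node k l r) ::ₘ (l.subtrees + r.subtrees)
end PTree

/-!
Subtrees never exceed their ambient tree in size. So if the root has size `n'`, neither child
contains a subtree of size `n'`; otherwise the child of size `≤ ω < n'` contains none, and
induction applies to the other child.
-/
namespace PTree

theorem size_le_of_mem_subtrees {t s : PTree} (hs : s ∈ t.subtrees) : s.size ≤ t.size := by
  induction t with
  | leaf => simp [subtrees] at hs
  | node k l r ihl ihr =>
    simp only [subtrees, Multiset.mem_cons, Multiset.mem_add] at hs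
    rcases hs with rfl | hl | hr
    · exact le_rfl
    · have := ihl hl; simp only [size]; omega
    · have := ihr hr; simp only [size]; omega

theorem filter_size_subtrees_eq_zero {t : PTree} {n : ℕ} (ht : t.size < n) :
    t.subtrees.filter (fun s => s.size = n) = 0 :=
  Multiset.filter_eq_nil.mpr fun s hs hsn => by
    have := size_le_of_mem_subtrees hs
    omega

end PTree

/-- for every `n' > ω`, an Ω^ω-tree contains at most one subtree
of size `n'`. -/
theorem omega_tree_subtree_unique (ω n' : ℕ) (t : PTree)
    (hΩ : PTree.OmegaOK ω t) (hn' : ω < n') :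
    (t.subtrees.filter (fun s => s.size = n')).card ≤ 1 := by
  induction t with
  | leaf => simp [PTree.subtrees]
  | node k l r ihl ihr =>
    obtain ⟨hmin, hl, hr⟩ := hΩ
    rw [PTree.subtrees, Multiset.filter_cons, Multiset.filter_add, Multiset.card_add,
      Multiset.card_add]
    by_cases hroot : (PTree.node k l r).size = n'
    · have hsize : l.size < n' ∧ r.size < n' := by simp only [PTree.size] at hroot; omega
      simp [hroot, PTree.filter_size_subtrees_eq_zero hsize.1,
        PTree.filter_size_subtrees_eq_zero hsize.2]
    · rw [if_neg hroot, Multiset.card_zero, zero_add]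
      rcases min_le_iff.mp hmin with hsmall | hsmall
      · rw [PTree.filter_size_subtrees_eq_zero (hsmall.trans_lt hn'), Multiset.card_zero,
          zero_add]
        exact ihr hr
      · rw [PTree.filter_size_subtrees_eq_zero (hsmall.trans_lt hn'), Multiset.card_zero,
          add_zero]
        exact ihl hl
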